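/- (Converse of the distributed task-encoding theorem, IID case.) Fix ρ > 0 and set ρ̃ = 1/(1+ρ). Let P_{XY} be a joint PMF on the finite set X × Y, and let {(X_i,Y_i)}_{i=1}^∞ be IID with distribution P_{XY}. Let R_X, R_Y ≥ 0, and suppose there exists a sequence of pairs of functions f_n : X^n → {1,…,⌊2^{n·R_X}⌋}, g_n : Y^n → {1,…,⌊2^{n·R_Y}⌋} such that E[L(X^n,Y^n)^ρ] → 1 as n → ∞, where L(x^n,y^n) = |{(x',y') ∈ X^n × Y^n : f_n(x') = f_n(x^n) ∧ g_n(y') = g_n(y^n)}|. Then R_X ≥ H_{ρ̃}(P_X), R_Y ≥ H_{ρ̃}(P_Y), and R_X + R_Y ≥ H_{ρ̃}(P_{XY}) + K_{ρ̃}(X;Y). -/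

import Mathlib

open Filter

/-- `P` is a probability mass function on the finite type `X`. -/
def IsPMF {X : Type*} [Fintype X] (P : X → ℝ) : Prop :=
  (∀ x, 0 ≤ P x) ∧ ∑ x, P x = 1

/-- Rényi entropy of order `α` (base-2 logarithm). -/
noncomputable def renyiEntropy {X : Type*} [Fintype X] (α : ℝ) (P : X → ℝ) : ℝ :=
  (1 - α)⁻¹ * Real.logb 2 (∑ x, P x ^ α)

/-- Relative `α`-entropy `Δ_α(P‖Q)` (base-2 logarithm). -/
noncomputable def relAlphaEntropy {X : Type*} [Fintype X] (α : ℝ) (P Q : X → ℝ) : ℝ :=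
  (α / (1 - α)) * Real.logb 2 (∑ x, P x * Q x ^ (α - 1))
    + Real.logb 2 (∑ x, Q x ^ α)
    - (1 - α)⁻¹ * Real.logb 2 (∑ x, P x ^ α)

/-- The dependence measure `K_α(X;Y)`: the minimum of `Δ_α(P_{XY}‖Q_X Q_Y)` over all PMFs
`Q_X` and `Q_Y`.  (Restricting to everywhere-positive `Q_X`, `Q_Y` gives the same value,
since by the convention `p/0 = ∞` any `Q` vanishing on the support of `P` yields an
infinite relative entropy, and `Δ_α` is continuous in positive `Q`.) -/
noncomputable def Kdep {X Y : Type*} [Fintype X] [Fintype Y] (α : ℝ) (P : X × Y → ℝ) : ℝ :=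
  sInf {r : ℝ | ∃ QX : X → ℝ, ∃ QY : Y → ℝ, IsPMF QX ∧ IsPMF QY ∧
    (∀ x, 0 < QX x) ∧ (∀ y, 0 < QY y) ∧
    r = relAlphaEntropy α P (fun p => QX p.1 * QY p.2)}

/-- The joint list size of `(xs,ys)` under the encoders `f` and `g`. -/
noncomputable def jointListSize {X Y : Type*} [Fintype X] [Fintype Y] {MX MY : ℕ}
    (f : X → Fin MX) (g : Y → Fin MY) (x : X) (y : Y) : ℕ :=
  (Finset.univ.filter (fun p : X × Y => f p.1 = f x ∧ g p.2 = g y)).card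

/-!
The list size factorises as `L(x, y) = σ_f(x) σ_g(y)`, where `σ_f(x)` is the size of the fibre of
`f` through `x`. As `∑ₓ 1 / σ_f(x)` counts the codewords in use, at most `2 ^ (n R_X)`, the
normalised `1 / σ_f` is a PMF `Q_X` with `σ_f ≥ 2 ^ (-n R_X) / Q_X`. Jensen's inequality gives
Arikan's bound `E[Q(W)^(-ρ)] ≥ 2 ^ (ρ H_ρ̃(W))`, and `H_ρ̃` is additive on product sources; this
yields the two single-rate bounds. For the sum rate, `Δ_ρ̃(P ‖ Q_X × Q_Y)` equals
`ρ⁻¹ log E[(a(X) b(Y))^(-ρ)] - H_ρ̃(P)` where `a × b` is the escort of order `ρ̃` of `Q_X × Q_Y`, so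
`E[(a(X) b(Y))^(-ρ)] ≥ 2 ^ (ρ (H_ρ̃(P) + K_ρ̃(X;Y)))` for product PMFs, and the chain rule
tensorises this bound to arbitrary PMFs on `Xⁿ` and `Yⁿ`. Every bound is `2 ^ (ρ n t) ≤ E[L^ρ]`,
and `E[L^ρ] → 1` forces `t ≤ 0`.
-/

section PMF

variable {W : Type*} [Fintype W]

lemma IsPMF.exists_pos {μ : W → ℝ} (hμ : IsPMF μ) : ∃ w, 0 < μ w := by
  by_contra! h
  have : ∑ w, μ w ≤ 0 := Finset.sum_nonpos fun w _ => h w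
  linarith [hμ.2]

lemma IsPMF.sum_rpow_pos {μ : W → ℝ} (hμ : IsPMF μ) (t : ℝ) : 0 < ∑ w, μ w ^ t := by
  obtain ⟨w₀, hw₀⟩ := hμ.exists_pos
  exact Finset.sum_pos' (fun w _ => Real.rpow_nonneg (hμ.1 w) t)
    ⟨w₀, Finset.mem_univ _, Real.rpow_pos_of_pos hw₀ t⟩

lemma IsPMF.sum_mul_rpow_pos {μ q : W → ℝ} (hμ : IsPMF μ) (hq : ∀ w, 0 < q w) (t : ℝ) :
    0 < ∑ w, μ w * q w ^ t := by
  obtain ⟨w₀, hw₀⟩ := hμ.exists_pos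
  exact Finset.sum_pos' (fun w _ => mul_nonneg (hμ.1 w) (Real.rpow_nonneg (hq w).le t))
    ⟨w₀, Finset.mem_univ _, mul_pos hw₀ (Real.rpow_pos_of_pos (hq w₀) t)⟩

lemma IsPMF.pi {μ : W → ℝ} (hμ : IsPMF μ) (n : ℕ) : IsPMF fun x : Fin n → W => ∏ i, μ (x i) :=
  ⟨fun x => Finset.prod_nonneg fun i _ => hμ.1 (x i), by
    rw [← Fintype.prod_sum fun (_ : Fin n) w => μ w, hμ.2, Finset.prod_const_one]⟩

lemma IsPMF.fst {V : Type*} [Fintype V] {P : W × V → ℝ} (hP : IsPMF P) :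
    IsPMF fun w => ∑ v, P (w, v) :=
  ⟨fun w => Finset.sum_nonneg fun v _ => hP.1 _, by rw [← Fintype.sum_prod_type, hP.2]⟩

lemma IsPMF.swap {V : Type*} [Fintype V] {P : W × V → ℝ} (hP : IsPMF P) :
    IsPMF fun p : V × W => P p.swap :=
  ⟨fun _ => hP.1 _, ((Equiv.prodComm V W).sum_comp P).trans hP.2⟩

end PMF

section Renyi

variable {W : Type*} [Fintype W]

lemma renyiEntropy_pi (α : ℝ) {μ : W → ℝ} (hμ : ∀ w, 0 ≤ μ w) (n : ℕ) :
    renyiEntropy α (fun x : Fin n → W => ∏ i, μ (x i)) = n * renyiEntropy α μ := by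
  have hsum : ∑ x : Fin n → W, (∏ i, μ (x i)) ^ α = (∑ w, μ w ^ α) ^ n := by
    simp_rw [← Real.finsetProd_rpow _ _ fun i _ => hμ _]
    rw [← Fintype.prod_sum fun (_ : Fin n) w => μ w ^ α, Finset.prod_const, Finset.card_univ,
      Fintype.card_fin]
  rw [renyiEntropy, renyiEntropy, hsum, Real.logb_pow]
  ring

lemma two_rpow_mul_renyiEntropy {ρ : ℝ} (hρ : 0 < ρ) {μ : W → ℝ}
    (hμ : 0 < ∑ w, μ w ^ (1 / (1 + ρ))) :
    (2 : ℝ) ^ (ρ * renyiEntropy (1 / (1 + ρ)) μ) = (∑ w, μ w ^ (1 / (1 + ρ))) ^ (1 + ρ) := by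
  have hexp : ρ * (1 - 1 / (1 + ρ))⁻¹ = 1 + ρ := by
    have : (1 : ℝ) + ρ ≠ 0 := by linarith
    field_simp
    rw [add_sub_cancel_left, div_self hρ.ne']
  rw [renyiEntropy, ← mul_assoc, hexp, mul_comm, Real.rpow_mul zero_le_two,
    Real.rpow_logb two_pos (by norm_num) hμ]

/-- Arikan's guessing bound: by Jensen's inequality for `t ↦ t ^ (1 + ρ)` under the weights `q`. -/
lemma two_rpow_mul_renyiEntropy_le {ρ : ℝ} (hρ : 0 < ρ) {μ q : W → ℝ} (hμ : IsPMF μ)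
    (hq : IsPMF q) (hq_pos : ∀ w, 0 < q w) :
    (2 : ℝ) ^ (ρ * renyiEntropy (1 / (1 + ρ)) μ) ≤ ∑ w, μ w * q w ^ (-ρ) := by
  rw [two_rpow_mul_renyiEntropy hρ (hμ.sum_rpow_pos _)]
  have hjensen := Real.rpow_arith_mean_le_arith_mean_rpow Finset.univ q
    (fun w => μ w ^ (1 / (1 + ρ)) / q w) (fun w _ => (hq_pos w).le) hq.2
    (fun w _ => div_nonneg (Real.rpow_nonneg (hμ.1 w) _) (hq_pos w).le) (p := 1 + ρ)
    (by linarith)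
  have hmean : ∀ w, q w * (μ w ^ (1 / (1 + ρ)) / q w) = μ w ^ (1 / (1 + ρ)) := fun w =>
    mul_div_cancel₀ _ (hq_pos w).ne'
  have hpow : ∀ w, q w * (μ w ^ (1 / (1 + ρ)) / q w) ^ (1 + ρ) = μ w * q w ^ (-ρ) := by
    intro w
    rw [Real.div_rpow (Real.rpow_nonneg (hμ.1 w) _) (hq_pos w).le, ← Real.rpow_mul (hμ.1 w),
      one_div_mul_cancel (by linarith), Real.rpow_one, Real.rpow_neg (hq_pos w).le,
      Real.rpow_add (hq_pos w), Real.rpow_one]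
    field_simp [(hq_pos w).ne']
  simpa only [hmean, hpow] using hjensen

end Renyi

section Escort

variable {W : Type*} [Fintype W]

noncomputable def escort (t : ℝ) (Q : W → ℝ) (w : W) : ℝ :=
  Q w ^ t / ∑ v, Q v ^ t

variable {Q : W → ℝ}

lemma sum_rpow_pos_of_pos [Nonempty W] (hQ : ∀ w, 0 < Q w) (t : ℝ) : 0 < ∑ w, Q w ^ t :=
  Finset.sum_pos (fun w _ => Real.rpow_pos_of_pos (hQ w) t) Finset.univ_nonempty

lemma escort_pos (hQ : ∀ w, 0 < Q w) (t : ℝ) (w : W) : 0 < escort t Q w :=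
  have : Nonempty W := ⟨w⟩
  div_pos (Real.rpow_pos_of_pos (hQ w) t) (sum_rpow_pos_of_pos hQ t)

lemma isPMF_escort [Nonempty W] (hQ : ∀ w, 0 < Q w) (t : ℝ) : IsPMF (escort t Q) :=
  ⟨fun w => (escort_pos hQ t w).le, by
    simp only [escort, ← Finset.sum_div, div_self (sum_rpow_pos_of_pos hQ t).ne']⟩

lemma escort_escort (hQ : ∀ w, 0 < Q w) (s t : ℝ) :
    escort s (escort t Q) = escort (t * s) Q := by
  ext w
  have : Nonempty W := ⟨w⟩
  have hZ := sum_rpow_pos_of_pos hQ t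
  have hpow : ∀ v, escort t Q v ^ s = Q v ^ (t * s) / (∑ u, Q u ^ t) ^ s := fun v => by
    rw [escort, Real.div_rpow (Real.rpow_nonneg (hQ v).le _) hZ.le, ← Real.rpow_mul (hQ v).le]
  rw [escort, hpow, Finset.sum_congr rfl fun v _ => hpow v, ← Finset.sum_div,
    div_div_div_cancel_right₀ (Real.rpow_pos_of_pos hZ s).ne', escort]

lemma escort_one (hQ : ∑ w, Q w = 1) : escort 1 Q = Q := by
  ext w
  simp [escort, hQ]

lemma escort_prod {V : Type*} [Fintype V] {a : W → ℝ} {b : V → ℝ} (ha : ∀ w, 0 ≤ a w)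
    (hb : ∀ v, 0 ≤ b v) (t : ℝ) :
    escort t (fun p : W × V => a p.1 * b p.2) = fun p => escort t a p.1 * escort t b p.2 := by
  ext p
  simp only [escort, Real.mul_rpow (ha _) (hb _), Fintype.sum_prod_type, ← Finset.mul_sum,
    ← Finset.sum_mul]
  rw [mul_div_mul_comm]

end Escort

section RelativeEntropy

variable {W : Type*} [Fintype W] {ρ : ℝ} {P Q : W → ℝ}

lemma relAlphaEntropy_eq (hρ : 0 < ρ) (hP : IsPMF P) (hQ : ∀ w, 0 < Q w) :
    relAlphaEntropy (1 / (1 + ρ)) P Q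
      = Real.logb 2 (∑ w, P w * escort (1 / (1 + ρ)) Q w ^ (-ρ)) / ρ
        - renyiEntropy (1 / (1 + ρ)) P := by
  obtain ⟨w₀, -⟩ := hP.exists_pos
  have : Nonempty W := ⟨w₀⟩
  set Z := ∑ w, Q w ^ (1 / (1 + ρ))
  have hZ : 0 < Z := sum_rpow_pos_of_pos hQ _
  have hS := hP.sum_mul_rpow_pos hQ (1 / (1 + ρ) - 1)
  have hexp : 1 / (1 + ρ) * -ρ = 1 / (1 + ρ) - 1 := by field_simp; ring
  have hsum : ∑ w, P w * escort (1 / (1 + ρ)) Q w ^ (-ρ)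
      = Z ^ ρ * ∑ w, P w * Q w ^ (1 / (1 + ρ) - 1) := by
    rw [Finset.mul_sum]
    refine Finset.sum_congr rfl fun w _ => ?_
    rw [escort, Real.div_rpow (Real.rpow_nonneg (hQ w).le _) hZ.le, ← Real.rpow_mul (hQ w).le,
      hexp, Real.rpow_neg hZ.le]
    field_simp
  have hcoef : 1 / (1 + ρ) / (1 - 1 / (1 + ρ)) = 1 / ρ := by
    have : (1 : ℝ) + ρ ≠ 0 := by linarith
    field_simp
    rw [add_sub_cancel_left, div_self hρ.ne']
  rw [hsum, Real.logb_mul (Real.rpow_pos_of_pos hZ ρ).ne' hS.ne',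
    Real.logb_rpow_eq_mul_logb_of_pos hZ, add_div, mul_div_cancel_left₀ _ hρ.ne',
    relAlphaEntropy, hcoef, renyiEntropy]
  ring

lemma relAlphaEntropy_nonneg (hρ : 0 < ρ) (hP : IsPMF P) (hQ : ∀ w, 0 < Q w) :
    0 ≤ relAlphaEntropy (1 / (1 + ρ)) P Q := by
  obtain ⟨w₀, -⟩ := hP.exists_pos
  have : Nonempty W := ⟨w₀⟩
  have hS := hP.sum_mul_rpow_pos (escort_pos hQ (1 / (1 + ρ))) (-ρ)
  have hlog := (Real.le_logb_iff_rpow_le one_lt_two hS).mpr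
    (two_rpow_mul_renyiEntropy_le hρ hP (isPMF_escort hQ _) (escort_pos hQ _))
  rw [relAlphaEntropy_eq hρ hP hQ, sub_nonneg, le_div_iff₀ hρ, mul_comm]
  exact hlog

end RelativeEntropy

section Dependence

variable {X Y : Type*} [Fintype X] [Fintype Y] {ρ : ℝ} {P : X × Y → ℝ}

lemma Kdep_le_relAlphaEntropy (hρ : 0 < ρ) (hP : IsPMF P) {QX : X → ℝ} {QY : Y → ℝ}
    (hQX : IsPMF QX) (hQY : IsPMF QY) (hQX_pos : ∀ x, 0 < QX x) (hQY_pos : ∀ y, 0 < QY y) :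
    Kdep (1 / (1 + ρ)) P ≤ relAlphaEntropy (1 / (1 + ρ)) P (fun p => QX p.1 * QY p.2) := by
  refine csInf_le ⟨0, ?_⟩ ⟨QX, QY, hQX, hQY, hQX_pos, hQY_pos, rfl⟩
  rintro r ⟨QX', QY', -, -, hQX', hQY', rfl⟩
  exact relAlphaEntropy_nonneg hρ hP fun p => mul_pos (hQX' p.1) (hQY' p.2)

/-- `Kdep` is tested at the escorts of order `1 + ρ` of `a` and `b`, whose escorts of order
`1 / (1 + ρ)` are `a` and `b` again. -/
lemma two_rpow_mul_renyiEntropy_add_Kdep_le (hρ : 0 < ρ) (hP : IsPMF P) {a : X → ℝ} {b : Y → ℝ}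
    (ha : IsPMF a) (hb : IsPMF b) (ha_pos : ∀ x, 0 < a x) (hb_pos : ∀ y, 0 < b y) :
    (2 : ℝ) ^ (ρ * (renyiEntropy (1 / (1 + ρ)) P + Kdep (1 / (1 + ρ)) P))
      ≤ ∑ p, P p * (a p.1 * b p.2) ^ (-ρ) := by
  obtain ⟨⟨x₀, y₀⟩, -⟩ := hP.exists_pos
  have : Nonempty X := ⟨x₀⟩
  have : Nonempty Y := ⟨y₀⟩
  have hα : (1 + ρ) * (1 / (1 + ρ)) = 1 := by field_simp
  have hK := Kdep_le_relAlphaEntropy hρ hP (isPMF_escort ha_pos (1 + ρ))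
    (isPMF_escort hb_pos (1 + ρ)) (escort_pos ha_pos _) (escort_pos hb_pos _)
  rw [relAlphaEntropy_eq hρ hP fun p => mul_pos (escort_pos ha_pos _ p.1) (escort_pos hb_pos _ p.2),
    escort_prod (fun x => (escort_pos ha_pos _ x).le) (fun y => (escort_pos hb_pos _ y).le),
    escort_escort ha_pos, escort_escort hb_pos, hα, escort_one ha.2, escort_one hb.2] at hK
  have hS := hP.sum_mul_rpow_pos (fun p => mul_pos (ha_pos p.1) (hb_pos p.2)) (-ρ)
  rw [← Real.le_logb_iff_rpow_le one_lt_two hS]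
  rw [le_sub_iff_add_le, le_div_iff₀ hρ] at hK
  linarith

end Dependence

section Tensorization

variable {X Y : Type*} [Fintype X] [Fintype Y]

lemma sum_pi_prod_succ {n : ℕ} (F : (Fin (n + 1) → X) × (Fin (n + 1) → Y) → ℝ) :
    ∑ p, F p = ∑ r : (Fin n → X) × (Fin n → Y), ∑ s : X × Y,
      F (Fin.cons s.1 r.1, Fin.cons s.2 r.2) := by
  let e : ((Fin n → X) × (Fin n → Y)) × (X × Y) ≃ (Fin (n + 1) → X) × (Fin (n + 1) → Y) :=
    { toFun := fun q => (Fin.cons q.2.1 q.1.1, Fin.cons q.2.2 q.1.2)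
      invFun := fun p => ((Fin.tail p.1, Fin.tail p.2), (p.1 0, p.2 0))
      left_inv := fun q => by simp
      right_inv := fun p => by simp }
  rw [← e.sum_comp, Fintype.sum_prod_type]
  rfl

lemma IsPMF.exists_cons_eq_mul [Nonempty X] {n : ℕ} {Q : (Fin (n + 1) → X) → ℝ} (hQ : IsPMF Q)
    (hQ_pos : ∀ x, 0 < Q x) :
    ∃ (Q' : (Fin n → X) → ℝ) (a : (Fin n → X) → X → ℝ), IsPMF Q' ∧ (∀ u, 0 < Q' u) ∧
      (∀ u, IsPMF (a u)) ∧ (∀ u x, 0 < a u x) ∧ ∀ x u, Q (Fin.cons x u) = Q' u * a u x := by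
  set Q' : (Fin n → X) → ℝ := fun u => ∑ x, Q (Fin.cons x u)
  have hQ'_pos : ∀ u, 0 < Q' u := fun u =>
    Finset.sum_pos (fun x _ => hQ_pos _) Finset.univ_nonempty
  refine ⟨Q', fun u x => Q (Fin.cons x u) / Q' u, ⟨fun u => (hQ'_pos u).le, ?_⟩, hQ'_pos,
    fun u => ⟨fun x => (div_pos (hQ_pos _) (hQ'_pos u)).le, ?_⟩,
    fun u x => div_pos (hQ_pos _) (hQ'_pos u), fun x u => (mul_div_cancel₀ _ (hQ'_pos u).ne').symm⟩
  · rw [Finset.sum_comm, ← Fintype.sum_prod_type' fun x u => Q (Fin.cons x u)]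
    exact ((Fin.consEquiv fun _ => X).sum_comp Q).trans hQ.2
  · rw [← Finset.sum_div, div_self (hQ'_pos u).ne']

lemma pow_le_sum_prod_mul_rpow_neg [Nonempty X] [Nonempty Y] {P : X × Y → ℝ} {ρ c : ℝ}
    (hc : 0 ≤ c) (hP : ∀ p, 0 ≤ P p)
    (h₁ : ∀ (a : X → ℝ) (b : Y → ℝ), IsPMF a → IsPMF b → (∀ x, 0 < a x) → (∀ y, 0 < b y) →
      c ≤ ∑ p, P p * (a p.1 * b p.2) ^ (-ρ))
    (n : ℕ) {Q : (Fin n → X) → ℝ} {R : (Fin n → Y) → ℝ} (hQ : IsPMF Q) (hR : IsPMF R)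
    (hQ_pos : ∀ x, 0 < Q x) (hR_pos : ∀ y, 0 < R y) :
    c ^ n ≤ ∑ p : (Fin n → X) × (Fin n → Y), (∏ i, P (p.1 i, p.2 i)) * (Q p.1 * R p.2) ^ (-ρ) := by
  induction n with
  | zero =>
    have hQ₁ : Q default = 1 := by simpa using hQ.2
    have hR₁ : R default = 1 := by simpa using hR.2
    simp [Fintype.sum_prod_type, hQ₁, hR₁]
  | succ n ih =>
    obtain ⟨Q', a, hQ', hQ'_pos, ha, ha_pos, hQa⟩ := hQ.exists_cons_eq_mul hQ_pos
    obtain ⟨R', b, hR', hR'_pos, hb, hb_pos, hRb⟩ := hR.exists_cons_eq_mul hR_pos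
    have hsplit : ∀ (r : (Fin n → X) × (Fin n → Y)) (s : X × Y),
        (∏ i, P ((Fin.cons s.1 r.1 : Fin (n + 1) → X) i, (Fin.cons s.2 r.2 : Fin (n + 1) → Y) i))
            * (Q (Fin.cons s.1 r.1) * R (Fin.cons s.2 r.2)) ^ (-ρ)
          = (∏ i, P (r.1 i, r.2 i)) * (Q' r.1 * R' r.2) ^ (-ρ)
            * (P s * (a r.1 s.1 * b r.2 s.2) ^ (-ρ)) := by
      intro r s
      rw [Fin.prod_univ_succ, hQa, hRb, mul_mul_mul_comm,
        Real.mul_rpow (mul_pos (hQ'_pos _) (hR'_pos _)).le (mul_pos (ha_pos _ _) (hb_pos _ _)).le]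
      simp only [Fin.cons_zero, Fin.cons_succ]
      ring
    rw [sum_pi_prod_succ]
    simp only [hsplit, ← Finset.mul_sum]
    calc c ^ (n + 1) = c ^ n * c := pow_succ c n
      _ ≤ (∑ r : (Fin n → X) × (Fin n → Y), (∏ i, P (r.1 i, r.2 i)) * (Q' r.1 * R' r.2) ^ (-ρ))
            * c := mul_le_mul_of_nonneg_right (ih hQ' hR' hQ'_pos hR'_pos) hc
      _ ≤ _ := by
        rw [Finset.sum_mul]
        refine Finset.sum_le_sum fun r _ => mul_le_mul_of_nonneg_left
          (h₁ _ _ (ha r.1) (hb r.2) (ha_pos r.1) (hb_pos r.2)) ?_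
        exact mul_nonneg (Finset.prod_nonneg fun i _ => hP _)
          (Real.rpow_nonneg (mul_pos (hQ'_pos _) (hR'_pos _)).le _)

end Tensorization

section Encoders

variable {W A B β γ : Type*} [Fintype W] [Fintype A] [Fintype B] [DecidableEq β]
  [DecidableEq γ]

def fiberCard (f : W → β) (w : W) : ℕ :=
  (Finset.univ.filter fun w' => f w' = f w).card

lemma fiberCard_pos (f : W → β) (w : W) : 0 < fiberCard f w :=
  Finset.card_pos.mpr ⟨w, by simp⟩

lemma sum_inv_fiberCard (f : W → β) :
    ∑ w, (fiberCard f w : ℝ)⁻¹ = (Finset.univ.image f).card := by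
  simp only [fiberCard]
  rw [Finset.sum_comp (fun b => ((Finset.univ.filter fun w' => f w' = b).card : ℝ)⁻¹) f,
    Finset.card_eq_sum_ones, Nat.cast_sum, Nat.cast_one]
  refine Finset.sum_congr rfl fun b hb => ?_
  obtain ⟨w, -, rfl⟩ := Finset.mem_image.mp hb
  rw [nsmul_eq_mul, mul_inv_cancel₀]
  exact_mod_cast (fiberCard_pos f w).ne'

lemma exists_isPMF_rpow_neg_le_fiberCard_rpow [Nonempty W] [Fintype β] (f : W → β) {ρ B : ℝ}
    (hρ : 0 ≤ ρ) (hB : (Fintype.card β : ℝ) ≤ B) :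
    ∃ Q : W → ℝ, IsPMF Q ∧ (∀ w, 0 < Q w) ∧ ∀ w, (B * Q w) ^ (-ρ) ≤ (fiberCard f w : ℝ) ^ ρ := by
  have hσ : ∀ w, (0 : ℝ) < fiberCard f w := fun w => Nat.cast_pos.mpr (fiberCard_pos f w)
  set S : ℝ := ((Finset.univ.image f).card : ℝ)
  have hS : 0 < S := Nat.cast_pos.mpr (Finset.univ_nonempty.image f).card_pos
  have hSB : S ≤ B := le_trans (Nat.cast_le.mpr (Finset.card_le_univ _)) hB
  have hQ : ∀ w, 0 < (fiberCard f w : ℝ)⁻¹ / S := fun w => div_pos (inv_pos.mpr (hσ w)) hS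
  refine ⟨fun w => (fiberCard f w : ℝ)⁻¹ / S, ⟨fun w => (hQ w).le, ?_⟩, hQ, fun w => ?_⟩
  · rw [← Finset.sum_div, sum_inv_fiberCard, div_self hS.ne']
  · have hle : (fiberCard f w : ℝ)⁻¹ ≤ B * ((fiberCard f w : ℝ)⁻¹ / S) := by
      rw [mul_div_assoc', le_div_iff₀ hS, mul_comm]
      exact mul_le_mul_of_nonneg_right hSB (inv_pos.mpr (hσ w)).le
    calc (B * ((fiberCard f w : ℝ)⁻¹ / S)) ^ (-ρ) ≤ ((fiberCard f w : ℝ)⁻¹) ^ (-ρ) :=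
          Real.rpow_le_rpow_of_nonpos (inv_pos.mpr (hσ w)) hle (neg_nonpos.mpr hρ)
      _ = (fiberCard f w : ℝ) ^ ρ := by
          rw [Real.inv_rpow (hσ w).le, Real.rpow_neg (hσ w).le, inv_inv]

lemma two_rpow_mul_rpow_neg {q : ℝ} (hq : 0 ≤ q) (ρ R : ℝ) :
    ((2 : ℝ) ^ R * q) ^ (-ρ) = 2 ^ (-(ρ * R)) * q ^ (-ρ) := by
  rw [Real.mul_rpow (by positivity) hq, ← Real.rpow_mul zero_le_two, mul_neg, mul_comm R ρ]

lemma two_rpow_le_sum_mul_fiberCard_rpow [Fintype β] {ρ R : ℝ} (hρ : 0 < ρ) {μ : W → ℝ}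
    (hμ : IsPMF μ) (f : W → β) (hβ : (Fintype.card β : ℝ) ≤ 2 ^ R) :
    (2 : ℝ) ^ (ρ * (renyiEntropy (1 / (1 + ρ)) μ - R)) ≤ ∑ w, μ w * (fiberCard f w : ℝ) ^ ρ := by
  obtain ⟨w₀, -⟩ := hμ.exists_pos
  have : Nonempty W := ⟨w₀⟩
  obtain ⟨Q, hQ, hQ_pos, hQσ⟩ := exists_isPMF_rpow_neg_le_fiberCard_rpow f hρ.le hβ
  calc (2 : ℝ) ^ (ρ * (renyiEntropy (1 / (1 + ρ)) μ - R))
      = 2 ^ (-(ρ * R)) * 2 ^ (ρ * renyiEntropy (1 / (1 + ρ)) μ) := by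
        rw [← Real.rpow_add two_pos]; ring_nf
    _ ≤ 2 ^ (-(ρ * R)) * ∑ w, μ w * Q w ^ (-ρ) :=
        mul_le_mul_of_nonneg_left (two_rpow_mul_renyiEntropy_le hρ hμ hQ hQ_pos) (by positivity)
    _ = ∑ w, μ w * (2 ^ R * Q w) ^ (-ρ) := by
        simp only [two_rpow_mul_rpow_neg (hQ_pos _).le, Finset.mul_sum]
        ring_nf
    _ ≤ ∑ w, μ w * (fiberCard f w : ℝ) ^ ρ :=
        Finset.sum_le_sum fun w _ => mul_le_mul_of_nonneg_left (hQσ w) (hμ.1 w)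

lemma mul_le_sum_mul_fiberCard_mul_rpow [Nonempty A] [Nonempty B] [Fintype β] [Fintype γ]
    {ρ R₁ R₂ c : ℝ} (hρ : 0 < ρ) {μ : A × B → ℝ} (hμ : ∀ p, 0 ≤ μ p) (f : A → β) (g : B → γ)
    (hβ : (Fintype.card β : ℝ) ≤ 2 ^ R₁) (hγ : (Fintype.card γ : ℝ) ≤ 2 ^ R₂)
    (hc : ∀ (QA : A → ℝ) (QB : B → ℝ), IsPMF QA → IsPMF QB → (∀ a, 0 < QA a) → (∀ b, 0 < QB b) →
      c ≤ ∑ p, μ p * (QA p.1 * QB p.2) ^ (-ρ)) :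
    2 ^ (-(ρ * (R₁ + R₂))) * c ≤ ∑ p, μ p * ((fiberCard f p.1 : ℝ) * fiberCard g p.2) ^ ρ := by
  obtain ⟨QA, hQA, hQA_pos, hQAσ⟩ := exists_isPMF_rpow_neg_le_fiberCard_rpow f hρ.le hβ
  obtain ⟨QB, hQB, hQB_pos, hQBσ⟩ := exists_isPMF_rpow_neg_le_fiberCard_rpow g hρ.le hγ
  calc 2 ^ (-(ρ * (R₁ + R₂))) * c
      ≤ 2 ^ (-(ρ * (R₁ + R₂))) * ∑ p, μ p * (QA p.1 * QB p.2) ^ (-ρ) :=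
        mul_le_mul_of_nonneg_left (hc QA QB hQA hQB hQA_pos hQB_pos) (by positivity)
    _ = ∑ p, μ p * ((2 ^ R₁ * QA p.1) ^ (-ρ) * (2 ^ R₂ * QB p.2) ^ (-ρ)) := by
        rw [Finset.mul_sum]
        refine Finset.sum_congr rfl fun p _ => ?_
        rw [two_rpow_mul_rpow_neg (hQA_pos _).le, two_rpow_mul_rpow_neg (hQB_pos _).le,
          Real.mul_rpow (hQA_pos _).le (hQB_pos _).le,
          show -(ρ * (R₁ + R₂)) = -(ρ * R₁) + -(ρ * R₂) by ring, Real.rpow_add two_pos]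
        ring
    _ ≤ ∑ p, μ p * ((fiberCard f p.1 : ℝ) * fiberCard g p.2) ^ ρ := by
        refine Finset.sum_le_sum fun p _ => mul_le_mul_of_nonneg_left ?_ (hμ p)
        rw [Real.mul_rpow (Nat.cast_nonneg _) (Nat.cast_nonneg _)]
        exact mul_le_mul (hQAσ p.1) (hQBσ p.2)
          (Real.rpow_nonneg (mul_nonneg (by positivity) (hQB_pos _).le) _) (by positivity)

end Encoders

section ListSize

variable {X Y : Type*} [Fintype X] [Fintype Y]

lemma jointListSize_eq_mul {MX MY : ℕ} (f : X → Fin MX) (g : Y → Fin MY) (x : X) (y : Y) :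
    jointListSize f g x y = fiberCard f x * fiberCard g y := by
  rw [jointListSize, fiberCard, fiberCard, ← Finset.card_product, ← Finset.filter_product]
  rfl

/-- `E[L(Xⁿ, Yⁿ) ^ ρ]`. -/
noncomputable def listSizeMoment (P : X × Y → ℝ) (ρ : ℝ) {n MX MY : ℕ}
    (f : (Fin n → X) → Fin MX) (g : (Fin n → Y) → Fin MY) : ℝ :=
  ∑ p : (Fin n → X) × (Fin n → Y), (∏ i, P (p.1 i, p.2 i)) * (jointListSize f g p.1 p.2 : ℝ) ^ ρ

variable {P : X × Y → ℝ} {ρ : ℝ} {n MX MY : ℕ}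

lemma listSizeMoment_eq (f : (Fin n → X) → Fin MX) (g : (Fin n → Y) → Fin MY) :
    listSizeMoment P ρ f g = ∑ p : (Fin n → X) × (Fin n → Y),
      (∏ i, P (p.1 i, p.2 i)) * ((fiberCard f p.1 : ℝ) * fiberCard g p.2) ^ ρ := by
  simp only [listSizeMoment, jointListSize_eq_mul, Nat.cast_mul]

lemma listSizeMoment_swap (f : (Fin n → X) → Fin MX) (g : (Fin n → Y) → Fin MY) :
    listSizeMoment P ρ f g = listSizeMoment (fun p => P p.swap) ρ g f := by
  rw [listSizeMoment_eq, listSizeMoment_eq, ← (Equiv.prodComm _ _).sum_comp]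
  simp [mul_comm]

lemma two_rpow_le_listSizeMoment_fst (hρ : 0 < ρ) (hP : IsPMF P) {RX : ℝ}
    (f : (Fin n → X) → Fin MX) (g : (Fin n → Y) → Fin MY) (hMX : (MX : ℝ) ≤ 2 ^ (n * RX)) :
    (2 : ℝ) ^ (ρ * (n * (renyiEntropy (1 / (1 + ρ)) (fun x => ∑ y, P (x, y)) - RX)))
      ≤ listSizeMoment P ρ f g := by
  have h := two_rpow_le_sum_mul_fiberCard_rpow hρ (hP.fst.pi n) f (by simpa using hMX)
  rw [renyiEntropy_pi _ hP.fst.1, ← mul_sub] at h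
  refine h.trans ?_
  rw [listSizeMoment_eq, Fintype.sum_prod_type]
  refine Finset.sum_le_sum fun x _ => ?_
  rw [Fintype.prod_sum, Finset.sum_mul]
  refine Finset.sum_le_sum fun y _ => mul_le_mul_of_nonneg_left ?_
    (Finset.prod_nonneg fun i _ => hP.1 _)
  refine Real.rpow_le_rpow (Nat.cast_nonneg _) ?_ hρ.le
  exact le_mul_of_one_le_right (Nat.cast_nonneg _) (Nat.one_le_cast.mpr (fiberCard_pos g y))

lemma two_rpow_le_listSizeMoment_snd (hρ : 0 < ρ) (hP : IsPMF P) {RY : ℝ}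
    (f : (Fin n → X) → Fin MX) (g : (Fin n → Y) → Fin MY) (hMY : (MY : ℝ) ≤ 2 ^ (n * RY)) :
    (2 : ℝ) ^ (ρ * (n * (renyiEntropy (1 / (1 + ρ)) (fun y => ∑ x, P (x, y)) - RY)))
      ≤ listSizeMoment P ρ f g := by
  rw [listSizeMoment_swap]
  exact two_rpow_le_listSizeMoment_fst hρ hP.swap g f hMY

lemma two_rpow_le_listSizeMoment (hρ : 0 < ρ) (hP : IsPMF P) {RX RY : ℝ}
    (f : (Fin n → X) → Fin MX) (g : (Fin n → Y) → Fin MY) (hMX : (MX : ℝ) ≤ 2 ^ (n * RX))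
    (hMY : (MY : ℝ) ≤ 2 ^ (n * RY)) :
    (2 : ℝ) ^ (ρ * (n * (renyiEntropy (1 / (1 + ρ)) P + Kdep (1 / (1 + ρ)) P - (RX + RY))))
      ≤ listSizeMoment P ρ f g := by
  obtain ⟨⟨x₀, y₀⟩, -⟩ := hP.exists_pos
  have : Nonempty X := ⟨x₀⟩
  have : Nonempty Y := ⟨y₀⟩
  set c : ℝ := 2 ^ (ρ * (renyiEntropy (1 / (1 + ρ)) P + Kdep (1 / (1 + ρ)) P))
  have hc : ∀ QX QY, IsPMF QX → IsPMF QY → (∀ x, 0 < QX x) → (∀ y, 0 < QY y) →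
      c ^ n ≤ ∑ p : (Fin n → X) × (Fin n → Y), (∏ i, P (p.1 i, p.2 i)) * (QX p.1 * QY p.2) ^ (-ρ) :=
    fun _ _ => pow_le_sum_prod_mul_rpow_neg (by positivity) hP.1
      (fun _ _ => two_rpow_mul_renyiEntropy_add_Kdep_le hρ hP) n
  calc (2 : ℝ) ^ (ρ * (n * (renyiEntropy (1 / (1 + ρ)) P + Kdep (1 / (1 + ρ)) P - (RX + RY))))
      = 2 ^ (-(ρ * (n * RX + n * RY))) * c ^ n := by
        rw [← Real.rpow_natCast, ← Real.rpow_mul zero_le_two, ← Real.rpow_add two_pos]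
        ring_nf
    _ ≤ listSizeMoment P ρ f g := by
        rw [listSizeMoment_eq]
        exact mul_le_sum_mul_fiberCard_mul_rpow hρ (fun p => Finset.prod_nonneg fun i _ => hP.1 _)
          f g (by simpa using hMX) (by simpa using hMY) hc

end ListSize

lemma nonpos_of_two_rpow_le_of_tendsto_one {E : ℕ → ℝ} (hE : Tendsto E atTop (nhds 1)) {ρ t : ℝ}
    (hρ : 0 < ρ) (h : ∀ n : ℕ, (2 : ℝ) ^ (ρ * (n * t)) ≤ E n) : t ≤ 0 := by
  by_contra! ht
  have hpow : ∀ n : ℕ, ((2 : ℝ) ^ (ρ * t)) ^ n ≤ E n := fun n => by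
    rw [← Real.rpow_natCast, ← Real.rpow_mul zero_le_two, mul_comm (ρ * t), mul_left_comm]
    exact h n
  have hθ : 1 < (2 : ℝ) ^ (ρ * t) := Real.one_lt_rpow one_lt_two (mul_pos hρ ht)
  exact not_tendsto_nhds_of_tendsto_atTop
    (tendsto_atTop_mono hpow (tendsto_pow_atTop_atTop_of_one_lt hθ)) 1 hE

theorem distributed_task_encoding_converse_iid_general
    {X Y : Type*} [Fintype X] [Fintype Y]
    (ρ : ℝ) (hρ : 0 < ρ) (P : X × Y → ℝ) (hP : IsPMF P)
    (RX RY : ℝ)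
    (F : ∀ n : ℕ, (Fin n → X) → Fin ⌊(2 : ℝ) ^ ((n : ℝ) * RX)⌋₊)
    (G : ∀ n : ℕ, (Fin n → Y) → Fin ⌊(2 : ℝ) ^ ((n : ℝ) * RY)⌋₊)
    (hconv : Tendsto
      (fun n : ℕ => ∑ p : (Fin n → X) × (Fin n → Y),
        (∏ i, P (p.1 i, p.2 i)) * (jointListSize (F n) (G n) p.1 p.2 : ℝ) ^ ρ)
      atTop (nhds 1)) :
    RX ≥ renyiEntropy (1 / (1 + ρ)) (fun x => ∑ y, P (x, y)) ∧
    RY ≥ renyiEntropy (1 / (1 + ρ)) (fun y => ∑ x, P (x, y)) ∧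
    RX + RY ≥ renyiEntropy (1 / (1 + ρ)) P + Kdep (1 / (1 + ρ)) P := by
  have hM : ∀ (n : ℕ) (R : ℝ), (⌊(2 : ℝ) ^ ((n : ℝ) * R)⌋₊ : ℝ) ≤ 2 ^ ((n : ℝ) * R) :=
    fun n R => Nat.floor_le (by positivity)
  have hX := nonpos_of_two_rpow_le_of_tendsto_one hconv hρ fun n =>
    two_rpow_le_listSizeMoment_fst hρ hP (F n) (G n) (hM n RX)
  have hY := nonpos_of_two_rpow_le_of_tendsto_one hconv hρ fun n =>
    two_rpow_le_listSizeMoment_snd hρ hP (F n) (G n) (hM n RY)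
  have hXY := nonpos_of_two_rpow_le_of_tendsto_one hconv hρ fun n =>
    two_rpow_le_listSizeMoment hρ hP (F n) (G n) (hM n RX) (hM n RY)
  refine ⟨?_, ?_, ?_⟩ <;> linarith

/-- converse, IID case: if there are encoders
`f_n : X^n → {1,…,⌊2^{nR_X}⌋}` and `g_n : Y^n → {1,…,⌊2^{nR_Y}⌋}` whose `ρ`-th moment of the
joint list size (under the `n`-fold product of `P_{XY}`) tends to `1`, then
`R_X ≥ H_{ρ̃}(P_X)`, `R_Y ≥ H_{ρ̃}(P_Y)` and `R_X + R_Y ≥ H_{ρ̃}(P_{XY}) + K_{ρ̃}(X;Y)`,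
where `ρ̃ = 1/(1+ρ)`. -/
theorem distributed_task_encoding_converse_iid
    {X Y : Type*} [Fintype X] [Fintype Y]
    (ρ : ℝ) (hρ : 0 < ρ) (P : X × Y → ℝ) (hP : IsPMF P)
    (RX RY : ℝ) (hRX : 0 ≤ RX) (hRY : 0 ≤ RY)
    (F : ∀ n : ℕ, (Fin n → X) → Fin ⌊(2 : ℝ) ^ ((n : ℝ) * RX)⌋₊)
    (G : ∀ n : ℕ, (Fin n → Y) → Fin ⌊(2 : ℝ) ^ ((n : ℝ) * RY)⌋₊)
    (hconv : Tendsto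
      (fun n : ℕ => ∑ p : (Fin n → X) × (Fin n → Y),
        (∏ i, P (p.1 i, p.2 i)) * (jointListSize (F n) (G n) p.1 p.2 : ℝ) ^ ρ)
      atTop (nhds 1)) :
    RX ≥ renyiEntropy (1 / (1 + ρ)) (fun x => ∑ y, P (x, y)) ∧
    RY ≥ renyiEntropy (1 / (1 + ρ)) (fun y => ∑ x, P (x, y)) ∧
    RX + RY ≥ renyiEntropy (1 / (1 + ρ)) P + Kdep (1 / (1 + ρ)) P :=
  distributed_task_encoding_converse_iid_general ρ hρ P hP RX RY F G hconv
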